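/- For θ ∈ (−1,1), let f_θ(z₁,z₂) = (1/(2π·√(1−θ²)))·exp( −(z₁² − 2θ·z₁·z₂ + z₂²) / (2·(1−θ²)) ), let φ(t) = (1/√(2π))·e^{−t²/2} and Φ(z) = ∫_{−∞}^{z} φ(t) dt. Then ∫_ℝ ∫_ℝ z₂·Φ(z₂)·φ(z₁)·f_θ(z₁,z₂) dz₁ dz₂ = (2 − θ²) / (4π·√(4 − θ²)). -/

import Mathlib

open MeasureTheory

/-- The standard bivariate normal density with correlation `θ`. -/
noncomputable def bvnDensity (θ z₁ z₂ : ℝ) : ℝ :=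
  (1 / (2 * Real.pi * Real.sqrt (1 - θ ^ 2))) *
    Real.exp (-(z₁ ^ 2 - 2 * θ * z₁ * z₂ + z₂ ^ 2) / (2 * (1 - θ ^ 2)))

/-- The standard normal density `φ(t) = (1/√(2π)) e^{-t²/2}`. -/
noncomputable def phi (t : ℝ) : ℝ := (1 / Real.sqrt (2 * Real.pi)) * Real.exp (-t ^ 2 / 2)

/-- The standard normal distribution function `Φ(z) = ∫_{-∞}^z φ(t) dt`. -/
noncomputable def Phi (z : ℝ) : ℝ := ∫ t in Set.Iic z, phi t

open Real Filter Set Topology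

lemma phi_eq (t : ℝ) : phi t = (1 / Real.sqrt (2 * Real.pi)) * Real.exp (-(2⁻¹) * t ^ 2) := by
  unfold phi; congr 1; ring_nf

lemma phi_nonneg (t : ℝ) : 0 ≤ phi t := by
  unfold phi; positivity

lemma phi_cont : Continuous phi := by
  unfold phi; fun_prop

lemma phi_integrable : Integrable phi := by
  rw [funext phi_eq]
  exact ((integrable_exp_neg_mul_sq (by norm_num : (0:ℝ) < 2⁻¹)).const_mul _)

lemma integral_phi : ∫ t, phi t = 1 := by
  simp_rw [phi_eq]
  rw [integral_const_mul, integral_gaussian]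
  rw [show (Real.pi / 2⁻¹) = 2 * Real.pi by ring]
  rw [one_div, inv_mul_cancel₀ (Real.sqrt_ne_zero'.2 (by positivity))]

lemma Phi_nonneg (z : ℝ) : 0 ≤ Phi z :=
  integral_nonneg fun t => phi_nonneg t

lemma Phi_le_one (z : ℝ) : Phi z ≤ 1 := by
  rw [← integral_phi]
  exact setIntegral_le_integral phi_integrable (Eventually.of_forall phi_nonneg)

lemma Phi_mono : Monotone Phi := fun a b hab =>
  setIntegral_mono_set phi_integrable.integrableOn
    (Eventually.of_forall phi_nonneg) (HasSubset.Subset.eventuallyLE (Iic_subset_Iic.2 hab))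

lemma Phi_measurable : Measurable Phi := Phi_mono.measurable

lemma Phi_hasDeriv (z : ℝ) : HasDerivAt Phi (phi z) z := by
  have h : Phi = fun x => Phi 0 + ∫ t in (0:ℝ)..x, phi t := by
    funext x
    have := intervalIntegral.integral_Iic_sub_Iic
      (phi_integrable.integrableOn (s := Iic 0)) (phi_integrable.integrableOn (s := Iic x))
    unfold Phi
    linarith [this]
  rw [h]
  exact (intervalIntegral.integral_hasDerivAt_right
    phi_integrable.intervalIntegrable
    phi_cont.aestronglyMeasurable.stronglyMeasurableAtFilter
    phi_cont.continuousAt).const_add _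

lemma inner_eq {θ : ℝ} (hθ : θ ^ 2 < 1) (z₂ : ℝ) :
    ∫ z₁, phi z₁ * bvnDensity θ z₁ z₂ =
      (1 / (2 * Real.pi * Real.sqrt (2 - θ ^ 2))) * Real.exp (-z₂ ^ 2 / (2 - θ ^ 2)) := by
  have hu : (0:ℝ) < 1 - θ ^ 2 := by linarith
  have hs : (0:ℝ) < 2 - θ ^ 2 := by linarith
  have hπ : (0:ℝ) < Real.pi := Real.pi_pos
  have key : ∀ z₁ : ℝ, phi z₁ * bvnDensity θ z₁ z₂ =
      ((1 / Real.sqrt (2 * Real.pi)) * (1 / (2 * Real.pi * Real.sqrt (1 - θ ^ 2))) *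
        Real.exp (-z₂ ^ 2 / (2 - θ ^ 2))) *
      Real.exp (-((2 - θ ^ 2) / (2 * (1 - θ ^ 2))) *
        (z₁ - θ * z₂ / (2 - θ ^ 2)) ^ 2) := by
    intro z₁
    have h1 : phi z₁ * bvnDensity θ z₁ z₂ =
        ((1 / Real.sqrt (2 * Real.pi)) * (1 / (2 * Real.pi * Real.sqrt (1 - θ ^ 2)))) *
        Real.exp (-z₁ ^ 2 / 2 + -(z₁ ^ 2 - 2 * θ * z₁ * z₂ + z₂ ^ 2) / (2 * (1 - θ ^ 2))) := by
      unfold phi bvnDensity; rw [Real.exp_add]; ring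
    have hexp : -z₁ ^ 2 / 2 + -(z₁ ^ 2 - 2 * θ * z₁ * z₂ + z₂ ^ 2) / (2 * (1 - θ ^ 2)) =
        -z₂ ^ 2 / (2 - θ ^ 2) + -((2 - θ ^ 2) / (2 * (1 - θ ^ 2))) *
          (z₁ - θ * z₂ / (2 - θ ^ 2)) ^ 2 := by
      field_simp
      ring
    rw [h1, hexp, Real.exp_add]; ring
  simp_rw [key]
  rw [integral_const_mul]
  rw [integral_sub_right_eq_self
    (fun z => Real.exp (-((2 - θ ^ 2) / (2 * (1 - θ ^ 2))) * z ^ 2)) (θ * z₂ / (2 - θ ^ 2))]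
  rw [integral_gaussian]
  have h2 : Real.pi / ((2 - θ ^ 2) / (2 * (1 - θ ^ 2))) =
      (2 * Real.pi) * (1 - θ ^ 2) / (2 - θ ^ 2) := by field_simp
  rw [h2, Real.sqrt_div (by positivity) _, Real.sqrt_mul (by positivity)]
  have e1 : Real.sqrt (2 * Real.pi) ≠ 0 := by positivity
  have e2 : Real.sqrt (1 - θ ^ 2) ≠ 0 := by positivity
  have e3 : Real.sqrt (2 - θ ^ 2) ≠ 0 := by positivity
  field_simp
  rw [← Real.sqrt_mul (by norm_num : (0:ℝ) ≤ 2), ← Real.sqrt_mul (by positivity)]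

lemma exp_div_eq (s z : ℝ) : Real.exp (-(s⁻¹) * z ^ 2) = Real.exp (-z ^ 2 / s) := by
  congr 1; ring

lemma tendsto_exp_neg_sq_div {s : ℝ} (hs : 0 < s) :
    Tendsto (fun z : ℝ => Real.exp (-z ^ 2 / s)) atTop (𝓝 0) := by
  have hp : Tendsto (fun z : ℝ => z ^ 2) atTop atTop :=
    tendsto_pow_atTop (by norm_num : (2:ℕ) ≠ 0)
  have h1 : Tendsto (fun z : ℝ => -z ^ 2 / s) atTop atBot := by
    have := tendsto_neg_atTop_atBot.comp hp
    exact (by simpa [Function.comp_def] using this : Tendsto (fun z : ℝ => -z ^ 2) atTop atBot).atBot_div_const hs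
  simpa [Function.comp_def] using Real.tendsto_exp_atBot.comp h1

lemma tendsto_exp_neg_sq_div' {s : ℝ} (hs : 0 < s) :
    Tendsto (fun z : ℝ => Real.exp (-z ^ 2 / s)) atBot (𝓝 0) := by
  have h2 : Tendsto (fun z : ℝ => z ^ 2) atBot atTop := by
    have := (tendsto_pow_atTop (by norm_num : (2:ℕ) ≠ 0) : Tendsto (fun z : ℝ => z ^ 2) atTop atTop).comp tendsto_neg_atBot_atTop
    simpa [Function.comp_def, neg_sq] using this
  have h3 : Tendsto (fun z : ℝ => -z ^ 2 / s) atBot atBot := by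
    have := tendsto_neg_atTop_atBot.comp h2
    exact (by simpa [Function.comp_def] using this : Tendsto (fun z : ℝ => -z ^ 2) atBot atBot).atBot_div_const hs
  simpa [Function.comp_def] using Real.tendsto_exp_atBot.comp h3

lemma int1 {s : ℝ} (hs : 0 < s) :
    Integrable (fun z : ℝ => z * Real.exp (-z ^ 2 / s) * Phi z) := by
  have hg : Integrable (fun z : ℝ => |z * Real.exp (-(s⁻¹) * z ^ 2)|) :=
    (integrable_mul_exp_neg_mul_sq (by positivity : (0:ℝ) < s⁻¹)).abs
  apply Integrable.mono' hg
  · exact ((measurable_id.mul (by fun_prop)).mul Phi_measurable).aestronglyMeasurable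
  · filter_upwards with z
    rw [exp_div_eq, norm_mul]
    have h1 : ‖Phi z‖ ≤ 1 := by rw [Real.norm_eq_abs, abs_of_nonneg (Phi_nonneg z)]; exact Phi_le_one z
    calc ‖z * Real.exp (-z ^ 2 / s)‖ * ‖Phi z‖ ≤ ‖z * Real.exp (-z ^ 2 / s)‖ * 1 := by
          gcongr
      _ = |z * Real.exp (-z ^ 2 / s)| := by rw [mul_one, Real.norm_eq_abs]

lemma int2 {s : ℝ} (hs : 0 < s) :
    Integrable (fun z : ℝ => -(s / 2) * Real.exp (-z ^ 2 / s) * phi z) := by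
  have heq : (fun z : ℝ => -(s / 2) * Real.exp (-z ^ 2 / s) * phi z) =
      fun z : ℝ => (-(s / 2) * (1 / Real.sqrt (2 * Real.pi))) *
        Real.exp (-((s + 2) / (2 * s)) * z ^ 2) := by
    funext z
    unfold phi
    have hxy : Real.exp (-z ^ 2 / s) * Real.exp (-z ^ 2 / 2) =
        Real.exp (-((s + 2) / (2 * s)) * z ^ 2) := by
      rw [← Real.exp_add]
      congr 1
      field_simp
      ring
    calc -(s / 2) * Real.exp (-z ^ 2 / s) * (1 / Real.sqrt (2 * Real.pi) * Real.exp (-z ^ 2 / 2))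
        = -(s / 2) * (1 / Real.sqrt (2 * Real.pi)) *
          (Real.exp (-z ^ 2 / s) * Real.exp (-z ^ 2 / 2)) := by ring
      _ = -(s / 2) * (1 / Real.sqrt (2 * Real.pi)) * Real.exp (-((s + 2) / (2 * s)) * z ^ 2) := by
          rw [hxy]
  rw [heq]
  exact (integrable_exp_neg_mul_sq (by positivity)).const_mul _

lemma parts {s : ℝ} (hs : 0 < s) :
    ∫ z : ℝ, z * Real.exp (-z ^ 2 / s) * Phi z =
      (s / 2) * ∫ z : ℝ, Real.exp (-z ^ 2 / s) * phi z := by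
  set f' : ℝ → ℝ := fun z => z * Real.exp (-z ^ 2 / s) * Phi z +
    -(s / 2) * Real.exp (-z ^ 2 / s) * phi z with hf'
  have hderiv : ∀ z : ℝ, HasDerivAt (fun z => -(s / 2) * Real.exp (-z ^ 2 / s) * Phi z)
      (f' z) z := by
    intro z
    have h1 : HasDerivAt (fun z : ℝ => -(s / 2) * Real.exp (-z ^ 2 / s))
        (z * Real.exp (-z ^ 2 / s)) z := by
      have h0 : HasDerivAt (fun z : ℝ => -z ^ 2 / s) (-(2 * z) / s) z := by
        have := ((hasDerivAt_pow 2 z).neg).div_const s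
        simpa using this
      have hd := (h0.exp).const_mul (-(s / 2))
      refine hd.congr_deriv ?_
      have hs0 : s ≠ 0 := hs.ne'
      field_simp
    have h2 := h1.mul (Phi_hasDeriv z)
    have h3 : f' z = z * Real.exp (-z ^ 2 / s) * Phi z +
        (fun z : ℝ => -(s / 2) * Real.exp (-z ^ 2 / s)) z * phi z := by
      simp only [hf']
    rw [h3]
    exact h2
  have hcont : Integrable f' := (int1 hs).add (int2 hs)
  have hbot : Tendsto (fun z => -(s / 2) * Real.exp (-z ^ 2 / s) * Phi z) atBot (𝓝 0) := by
    refine squeeze_zero_norm (a := fun z => (s / 2) * Real.exp (-z ^ 2 / s)) ?_ ?_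
    · intro z
      rw [norm_mul, norm_mul]
      have h1 : ‖Phi z‖ ≤ 1 := by
        rw [Real.norm_eq_abs, abs_of_nonneg (Phi_nonneg z)]; exact Phi_le_one z
      have h2 : ‖-(s / 2)‖ = s / 2 := by rw [norm_neg, Real.norm_eq_abs, abs_of_pos (by positivity)]
      have h3 : ‖Real.exp (-z ^ 2 / s)‖ = Real.exp (-z ^ 2 / s) := by
        rw [Real.norm_eq_abs, abs_of_pos (Real.exp_pos _)]
      rw [h2, h3]
      calc s / 2 * Real.exp (-z ^ 2 / s) * ‖Phi z‖ ≤ s / 2 * Real.exp (-z ^ 2 / s) * 1 := by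
            gcongr
        _ = s / 2 * Real.exp (-z ^ 2 / s) := mul_one _
    · simpa using (tendsto_exp_neg_sq_div' hs).const_mul (s / 2)
  have htop : Tendsto (fun z => -(s / 2) * Real.exp (-z ^ 2 / s) * Phi z) atTop (𝓝 0) := by
    refine squeeze_zero_norm (a := fun z => (s / 2) * Real.exp (-z ^ 2 / s)) ?_ ?_
    · intro z
      rw [norm_mul, norm_mul]
      have h1 : ‖Phi z‖ ≤ 1 := by
        rw [Real.norm_eq_abs, abs_of_nonneg (Phi_nonneg z)]; exact Phi_le_one z
      have h2 : ‖-(s / 2)‖ = s / 2 := by rw [norm_neg, Real.norm_eq_abs, abs_of_pos (by positivity)]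
      have h3 : ‖Real.exp (-z ^ 2 / s)‖ = Real.exp (-z ^ 2 / s) := by
        rw [Real.norm_eq_abs, abs_of_pos (Real.exp_pos _)]
      rw [h2, h3]
      calc s / 2 * Real.exp (-z ^ 2 / s) * ‖Phi z‖ ≤ s / 2 * Real.exp (-z ^ 2 / s) * 1 := by
            gcongr
        _ = s / 2 * Real.exp (-z ^ 2 / s) := mul_one _
    · simpa using (tendsto_exp_neg_sq_div hs).const_mul (s / 2)
  have hzero : ∫ z, f' z = 0 := by
    rw [MeasureTheory.integral_of_hasDerivAt_of_tendsto hderiv hcont hbot htop]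
    simp
  rw [integral_add (int1 hs) (int2 hs)] at hzero
  have h4 : ∫ z : ℝ, -(s / 2) * Real.exp (-z ^ 2 / s) * phi z =
      (-(s / 2)) * ∫ z : ℝ, Real.exp (-z ^ 2 / s) * phi z := by
    simp_rw [mul_assoc]
    exact integral_const_mul _ _
  rw [h4] at hzero
  linarith

lemma gauss_phi {s : ℝ} (hs : 0 < s) :
    ∫ z : ℝ, Real.exp (-z ^ 2 / s) * phi z = Real.sqrt (s / (s + 2)) := by
  have heq : (fun z : ℝ => Real.exp (-z ^ 2 / s) * phi z) =
      fun z : ℝ => (1 / Real.sqrt (2 * Real.pi)) * Real.exp (-((s + 2) / (2 * s)) * z ^ 2) := by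
    funext z
    unfold phi
    have hxy : Real.exp (-z ^ 2 / s) * Real.exp (-z ^ 2 / 2) =
        Real.exp (-((s + 2) / (2 * s)) * z ^ 2) := by
      rw [← Real.exp_add]; congr 1; field_simp; ring
    calc Real.exp (-z ^ 2 / s) * (1 / Real.sqrt (2 * Real.pi) * Real.exp (-z ^ 2 / 2))
        = (1 / Real.sqrt (2 * Real.pi)) * (Real.exp (-z ^ 2 / s) * Real.exp (-z ^ 2 / 2)) := by
          ring
      _ = (1 / Real.sqrt (2 * Real.pi)) * Real.exp (-((s + 2) / (2 * s)) * z ^ 2) := by rw [hxy]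
  rw [heq, integral_const_mul, integral_gaussian]
  have h2 : Real.pi / ((s + 2) / (2 * s)) = (2 * Real.pi) * (s / (s + 2)) := by
    field_simp
  rw [h2, Real.sqrt_mul (by positivity : (0:ℝ) ≤ 2 * Real.pi) (s / (s + 2))]
  rw [one_div, inv_mul_cancel_left₀ (Real.sqrt_ne_zero'.2 (by positivity))]

lemma bvn_nonneg (θ z₁ z₂ : ℝ) : 0 ≤ bvnDensity θ z₁ z₂ := by
  unfold bvnDensity; positivity

lemma prod_int {θ : ℝ} (hθ : θ ^ 2 < 1) :
    Integrable (Function.uncurry fun z₁ z₂ : ℝ =>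
      z₂ * Phi z₂ * phi z₁ * bvnDensity θ z₁ z₂) (volume.prod volume) := by
  have hu : (0:ℝ) < 1 - θ ^ 2 := by linarith
  set C : ℝ := (1 / Real.sqrt (2 * Real.pi)) * (1 / (2 * Real.pi * Real.sqrt (1 - θ ^ 2)))
    with hC
  have hC0 : 0 ≤ C := by rw [hC]; positivity
  have hg : Integrable (fun p : ℝ × ℝ =>
      Real.exp (-(2⁻¹) * p.1 ^ 2) * (C * |p.2 * Real.exp (-(2⁻¹) * p.2 ^ 2)|))
      (volume.prod volume) :=
    (integrable_exp_neg_mul_sq (by norm_num : (0:ℝ) < 2⁻¹)).mul_prod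
      (((integrable_mul_exp_neg_mul_sq (by norm_num : (0:ℝ) < 2⁻¹)).abs).const_mul C)
  apply Integrable.mono' hg
  · have hm : Measurable (fun p : ℝ × ℝ => p.2 * Phi p.2 * phi p.1 * bvnDensity θ p.1 p.2) := by
      apply Measurable.mul
      apply Measurable.mul
      apply Measurable.mul
      · exact measurable_snd
      · exact Phi_measurable.comp measurable_snd
      · unfold phi; fun_prop
      · unfold bvnDensity; fun_prop
    exact hm.aestronglyMeasurable
  · filter_upwards with p
    obtain ⟨z₁, z₂⟩ := p
    simp only [Function.uncurry_apply_pair]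
    have hb : phi z₁ * bvnDensity θ z₁ z₂ ≤
        C * (Real.exp (-(2⁻¹) * z₁ ^ 2) * Real.exp (-(2⁻¹) * z₂ ^ 2)) := by
      have h1 : phi z₁ * bvnDensity θ z₁ z₂ =
          C * Real.exp (-z₁ ^ 2 / 2 + -(z₁ ^ 2 - 2 * θ * z₁ * z₂ + z₂ ^ 2) / (2 * (1 - θ ^ 2))) := by
        unfold phi bvnDensity; rw [hC, Real.exp_add]; ring
      rw [h1, ← Real.exp_add]
      apply mul_le_mul_of_nonneg_left _ hC0
      apply Real.exp_le_exp.2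
      have h5 : -(z₁ ^ 2 - 2 * θ * z₁ * z₂ + z₂ ^ 2) / (2 * (1 - θ ^ 2)) ≤ -(2⁻¹) * z₂ ^ 2 := by
        rw [div_le_iff₀ (by positivity)]
        nlinarith [sq_nonneg (z₁ - θ * z₂)]
      have h6 : -z₁ ^ 2 / 2 ≤ -(2⁻¹) * z₁ ^ 2 := by ring_nf; exact le_refl _
      linarith
    have hnorm : ‖z₂ * Phi z₂ * phi z₁ * bvnDensity θ z₁ z₂‖ =
        (phi z₁ * bvnDensity θ z₁ z₂) * (|z₂| * Phi z₂) := by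
      rw [Real.norm_eq_abs, abs_mul, abs_mul, abs_mul, abs_of_nonneg (Phi_nonneg _),
        abs_of_nonneg (phi_nonneg _), abs_of_nonneg (bvn_nonneg θ z₁ z₂)]
      ring
    rw [hnorm]
    have habs : |z₂ * Real.exp (-(2⁻¹) * z₂ ^ 2)| = |z₂| * Real.exp (-(2⁻¹) * z₂ ^ 2) := by
      rw [abs_mul, abs_of_pos (Real.exp_pos _)]
    rw [habs]
    calc (phi z₁ * bvnDensity θ z₁ z₂) * (|z₂| * Phi z₂)
        ≤ (C * (Real.exp (-(2⁻¹) * z₁ ^ 2) * Real.exp (-(2⁻¹) * z₂ ^ 2))) * (|z₂| * 1) := by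
          apply mul_le_mul hb
          · exact mul_le_mul_of_nonneg_left (Phi_le_one _) (abs_nonneg _)
          · exact mul_nonneg (abs_nonneg _) (Phi_nonneg _)
          · exact mul_nonneg hC0 (by positivity)
      _ = Real.exp (-(2⁻¹) * z₁ ^ 2) * (C * (|z₂| * Real.exp (-(2⁻¹) * z₂ ^ 2))) := by ring

theorem stmt15 (θ : ℝ) (hθ : θ ∈ Set.Ioo (-1 : ℝ) 1) :
    (∫ z₁ : ℝ, ∫ z₂ : ℝ, z₂ * Phi z₂ * phi z₁ * bvnDensity θ z₁ z₂) =
      (2 - θ ^ 2) / (4 * Real.pi * Real.sqrt (4 - θ ^ 2)) := by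
  obtain ⟨h1, h2⟩ := hθ
  have hθ1 : θ ^ 2 < 1 := by nlinarith
  have hs : (0:ℝ) < 2 - θ ^ 2 := by linarith
  rw [integral_integral_swap (prod_int hθ1)]
  have hinner : ∀ z₂ : ℝ, (∫ z₁ : ℝ, z₂ * Phi z₂ * phi z₁ * bvnDensity θ z₁ z₂) =
      (1 / (2 * Real.pi * Real.sqrt (2 - θ ^ 2))) *
        (z₂ * Real.exp (-z₂ ^ 2 / (2 - θ ^ 2)) * Phi z₂) := by
    intro z₂
    have h3 : (fun z₁ : ℝ => z₂ * Phi z₂ * phi z₁ * bvnDensity θ z₁ z₂) =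
        fun z₁ : ℝ => (z₂ * Phi z₂) * (phi z₁ * bvnDensity θ z₁ z₂) := by
      funext z₁; ring
    rw [h3, integral_const_mul, inner_eq hθ1]
    ring
  simp_rw [hinner]
  rw [integral_const_mul, parts hs, gauss_phi hs]
  have h42 : (2 - θ ^ 2) + 2 = 4 - θ ^ 2 := by ring
  rw [h42, Real.sqrt_div hs.le]
  have ha : Real.sqrt (2 - θ ^ 2) ≠ 0 := Real.sqrt_ne_zero'.2 hs
  have hb : Real.sqrt (4 - θ ^ 2) ≠ 0 := Real.sqrt_ne_zero'.2 (by linarith)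
  have hπ : Real.pi ≠ 0 := Real.pi_ne_zero
  field_simp
  ring
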